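/- For every natural number N there exists a natural number K such that for every k ≥ K and every finite tree T with at most 2^{k−1} vertices and Γ(T) = k, one has Γ(T) − z(T) ≥ N. In particular, since the minimal tree t-atom T_k has exactly 2^{k−1} vertices and Γ(T_k) = k, it follows that Γ(T_k) − z(T_k) → ∞ as k → ∞. -/

import Mathlib

/-- A proper vertex coloring of `G` using exactly the colors `{1, …, k}`:
every vertex gets a color in `{1, …, k}`, adjacent vertices get different
colors, and every color in `{1, …, k}` is used. -/
def IsProperColoring {V : Type*} (G : SimpleGraph V) (k : ℕ) (c : V → ℕ) : Prop :=
  (∀ v, c v ∈ Finset.Icc 1 k) ∧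
  (∀ u v, G.Adj u v → c u ≠ c v) ∧
  (∀ i ∈ Finset.Icc 1 k, ∃ v, c v = i)

/-- A Grundy coloring of `G` using `k` colors: a proper coloring using `k` colors
such that every vertex of color `j` has, for each color `i < j`, a neighbor of color `i`. -/
def IsGrundyColoring {V : Type*} (G : SimpleGraph V) (k : ℕ) (c : V → ℕ) : Prop :=
  IsProperColoring G k c ∧
  ∀ v, ∀ i ∈ Finset.Icc 1 k, i < c v → ∃ w, G.Adj v w ∧ c w = i

/-- In a coloring `c` of `G` with colors `{1, …, k}`, a vertex `v` is color-dominating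
if for every color `j ∈ {1, …, k}` different from the color of `v`, the vertex `v`
has a neighbor of color `j`. -/
def IsCDVertex {V : Type*} (G : SimpleGraph V) (k : ℕ) (c : V → ℕ) (v : V) : Prop :=
  ∀ j ∈ Finset.Icc 1 k, j ≠ c v → ∃ w, G.Adj v w ∧ c w = j

/-- A color-dominating coloring (b-coloring) of `G` using `k` colors: a proper coloring
using `k` colors in which every color class contains a color-dominating vertex. -/
def IsBColoring {V : Type*} (G : SimpleGraph V) (k : ℕ) (c : V → ℕ) : Prop :=
  IsProperColoring G k c ∧
  ∀ i ∈ Finset.Icc 1 k, ∃ v, c v = i ∧ IsCDVertex G k c v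

/-- A z-coloring of `G` using `k` colors: a proper coloring which is simultaneously
a Grundy coloring and a color-dominating coloring, and which admits color-dominating
vertices `u 1, …, u k` with `c (u j) = j` such that `u k` is adjacent to each `u j`, `j ≠ k`. -/
def IsZColoring {V : Type*} (G : SimpleGraph V) (k : ℕ) (c : V → ℕ) : Prop :=
  IsGrundyColoring G k c ∧ IsBColoring G k c ∧
  ∃ u : ℕ → V,
    (∀ j ∈ Finset.Icc 1 k, c (u j) = j ∧ IsCDVertex G k c (u j)) ∧
    (∀ j ∈ Finset.Icc 1 k, j ≠ k → G.Adj (u k) (u j))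

/-- The Grundy number of `G`: the maximum `k` such that `G` admits a Grundy coloring
using `k` colors. -/
noncomputable def grundyNumber {V : Type*} (G : SimpleGraph V) : ℕ :=
  sSup {k | ∃ c : V → ℕ, IsGrundyColoring G k c}

/-- The b-chromatic number of `G`: the maximum `k` such that `G` admits a b-coloring
using `k` colors. -/
noncomputable def bNumber {V : Type*} (G : SimpleGraph V) : ℕ :=
  sSup {k | ∃ c : V → ℕ, IsBColoring G k c}

/-- The z-chromatic number of `G`: the maximum `k` such that `G` admits a z-coloring
using `k` colors. -/
noncomputable def zNumber {V : Type*} (G : SimpleGraph V) : ℕ :=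
  sSup {k | ∃ c : V → ℕ, IsZColoring G k c}

/-!
Let `c` be a Grundy coloring of a forest with `k` colors, and choose for every vertex `v` and every
color `i < c v` a neighbor `h v i` of color `i`. Starting from a vertex of color `k` and following
`h` repeatedly gives a witness tree; since paths in a forest are unique, its branches below a
vertex are pairwise disjoint and not joined by edges, so it has at least `2^(k-1)` vertices. If the
forest has at most `2^(k-1)` vertices, it is this witness tree, so every vertex `x` has at most one
neighbor of larger color and at most one neighbor of each smaller color. Hence `deg x ≤ c x ≤ k`,
and `x` has at most `k - d + 1` neighbors of degree at least `d`. In a z-coloring with `m` colors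
the vertex `u m` has `m - 1` neighbors of degree at least `m - 1`, which forces `2m ≤ k + 4`.
-/

open Finset SimpleGraph

variable {V : Type*} {G : SimpleGraph V}

theorem IsProperColoring.card_le [Fintype V] {k : ℕ} {c : V → ℕ}
    (hc : IsProperColoring G k c) : k ≤ Fintype.card V := by
  simpa using card_le_card_of_surjOn c (s := univ) (t := Icc 1 k) fun i hi => by
    obtain ⟨v, hv⟩ := hc.2.2 i hi
    exact ⟨v, mem_coe.2 (mem_univ v), hv⟩

theorem exists_isGrundyColoring_of_grundyNumber_eq [Fintype V] {k : ℕ} (hk : k ≠ 0)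
    (hΓ : grundyNumber G = k) : ∃ c, IsGrundyColoring G k c := by
  have hne : {k | ∃ c : V → ℕ, IsGrundyColoring G k c}.Nonempty := by
    by_contra hempty
    rw [Set.not_nonempty_iff_eq_empty] at hempty
    rw [grundyNumber, hempty, csSup_empty] at hΓ
    exact hk hΓ.symm
  exact hΓ ▸ Nat.sSup_mem hne ⟨Fintype.card V, fun _ ⟨_, hc⟩ => hc.1.card_le⟩

theorem IsCDVertex.le_degree [Fintype V] [DecidableRel G.Adj] {m : ℕ} {c : V → ℕ} {v : V}
    (hv : IsCDVertex G m c v) : m - 1 ≤ G.degree v := by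
  calc m - 1 = #(Icc 1 m) - 1 := by simp
    _ ≤ #((Icc 1 m).erase (c v)) := pred_card_le_card_erase
    _ ≤ #(G.neighborFinset v) := card_le_card_of_surjOn c fun j hj => by
      obtain ⟨hj, hjm⟩ := mem_erase.1 hj
      obtain ⟨w, hvw, hw⟩ := hv j hjm hj
      exact ⟨w, by simpa using hvw, hw⟩
    _ = G.degree v := card_neighborFinset_eq_degree G v

theorem IsZColoring.exists_le_card_filter_degree [Fintype V] [DecidableRel G.Adj] {m : ℕ}
    {c : V → ℕ} (hc : IsZColoring G m c) :
    ∃ x, m - 1 ≤ #{w ∈ G.neighborFinset x | m - 1 ≤ G.degree w} := by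
  obtain ⟨-, -, u, hu, hadj⟩ := hc
  refine ⟨u m, ?_⟩
  calc m - 1 = #(Icc 1 m) - 1 := by simp
    _ ≤ #((Icc 1 m).erase m) := pred_card_le_card_erase
    _ ≤ _ := card_le_card_of_surjOn c fun j hj => by
      obtain ⟨hjm, hj⟩ := mem_erase.1 hj
      refine ⟨u j, mem_filter.2 ⟨?_, (hu j hj).2.le_degree⟩, (hu j hj).1⟩
      exact (G.mem_neighborFinset _ _).2 (hadj j hj hjm)

theorem zNumber_le_of_card_filter_degree_le [Fintype V] [DecidableRel G.Adj] {k : ℕ}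
    (hdeg : ∀ x d, #{w ∈ G.neighborFinset x | d ≤ G.degree w} ≤ k - d + 1) :
    zNumber G ≤ (k + 4) / 2 :=
  csSup_le' fun m ⟨_, hc⟩ => by
    obtain ⟨x, hx⟩ := hc.exists_le_card_filter_degree
    have := hdeg x (m - 1)
    omega

theorem sum_Icc_two_pow_sub_one (m : ℕ) : ∑ i ∈ Icc 1 m, 2 ^ (i - 1) = 2 ^ m - 1 := by
  induction m with
  | zero => simp
  | succ m ih =>
    rw [sum_Icc_succ_top (by omega), ih, Nat.add_sub_cancel, pow_succ]
    have := Nat.one_le_two_pow (n := m)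
    omega

def IsGrundyWitness (G : SimpleGraph V) (c : V → ℕ) (h : V → ℕ → V) : Prop :=
  ∀ v i, 1 ≤ i → i < c v → G.Adj v (h v i) ∧ c (h v i) = i

section WitnessTree

variable [DecidableEq V] {c : V → ℕ} {h : V → ℕ → V}

variable (c h) in
def witnessTree : ℕ → V → Finset V
  | 0, v => {v}
  | n + 1, v => insert v ((Icc 1 (c v - 1)).biUnion fun i => witnessTree n (h v i))

theorem mem_witnessTree_succ {n : ℕ} {v y : V} :
    y ∈ witnessTree c h (n + 1) v ↔
      y = v ∨ ∃ i, 1 ≤ i ∧ i < c v ∧ y ∈ witnessTree c h n (h v i) := by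
  simp only [witnessTree, mem_insert, mem_biUnion, mem_Icc]
  refine or_congr_right ⟨fun ⟨i, ⟨hi, hiv⟩, hy⟩ => ⟨i, hi, by omega, hy⟩,
    fun ⟨i, hi, hiv, hy⟩ => ⟨i, ⟨hi, by omega⟩, hy⟩⟩

theorem color_le_of_mem_witnessTree (hh : IsGrundyWitness G c h) {n : ℕ} {v x : V}
    (hx : x ∈ witnessTree c h n v) : c x ≤ c v := by
  induction n generalizing v with
  | zero => rw [mem_singleton.1 hx]
  | succ n ih =>
    obtain rfl | ⟨i, hi, hiv, hx⟩ := mem_witnessTree_succ.1 hx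
    · rfl
    · have := ih hx
      rw [(hh v i hi hiv).2] at this
      omega

theorem notMem_witnessTree_of_lt (hh : IsGrundyWitness G c h) {n i : ℕ} {v : V} (hi : 1 ≤ i)
    (hiv : i < c v) : v ∉ witnessTree c h n (h v i) := fun hv => by
  have := color_le_of_mem_witnessTree hh hv
  rw [(hh v i hi hiv).2] at this
  omega

theorem exists_isPath_of_mem_witnessTree (hh : IsGrundyWitness G c h) {n : ℕ} {v x : V}
    (hx : x ∈ witnessTree c h n v) :
    ∃ p : G.Walk v x, p.IsPath ∧ ∀ y ∈ p.support, y ∈ witnessTree c h n v := by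
  induction n generalizing v with
  | zero =>
    rw [witnessTree, mem_singleton] at hx
    subst hx
    exact ⟨.nil, .nil, by simp [witnessTree]⟩
  | succ n ih =>
    obtain rfl | ⟨i, hi, hiv, hx⟩ := mem_witnessTree_succ.1 hx
    · exact ⟨.nil, .nil, by simp [mem_witnessTree_succ]⟩
    obtain ⟨q, hq, hqW⟩ := ih hx
    refine ⟨.cons (hh v i hi hiv).1 q,
      hq.cons fun hv => notMem_witnessTree_of_lt hh hi hiv (hqW v hv), fun y hy => ?_⟩
    rw [Walk.support_cons, List.mem_cons] at hy
    exact mem_witnessTree_succ.2 (hy.imp_right fun hy => ⟨i, hi, hiv, hqW y hy⟩)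

theorem exists_isPath_snd_eq_of_mem_witnessTree (hh : IsGrundyWitness G c h) {n i : ℕ}
    {v x : V} (hi : 1 ≤ i) (hiv : i < c v) (hx : x ∈ witnessTree c h n (h v i)) :
    ∃ p : G.Walk v x, p.IsPath ∧ p.snd = h v i ∧
      ∀ y ∈ p.support, y = v ∨ y ∈ witnessTree c h n (h v i) := by
  obtain ⟨q, hq, hqW⟩ := exists_isPath_of_mem_witnessTree hh hx
  refine ⟨.cons (hh v i hi hiv).1 q,
    hq.cons fun hv => notMem_witnessTree_of_lt hh hi hiv (hqW v hv), Walk.snd_cons _ _,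
    fun y hy => ?_⟩
  rw [Walk.support_cons, List.mem_cons] at hy
  exact hy.imp_right (hqW y)

theorem snd_eq_of_mem_witnessTree (hG : G.IsAcyclic) (hh : IsGrundyWitness G c h) {n i : ℕ}
    {v x : V} (hi : 1 ≤ i) (hiv : i < c v) (hx : x ∈ witnessTree c h n (h v i))
    {p : G.Walk v x} (hp : p.IsPath) : p.snd = h v i := by
  obtain ⟨q, hq, hqs, -⟩ := exists_isPath_snd_eq_of_mem_witnessTree hh hi hiv hx
  have := hG.subsingleton_path v x
  obtain rfl : p = q := congrArg Subtype.val (Subsingleton.elim ⟨p, hp⟩ ⟨q, hq⟩)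
  exact hqs

theorem eq_of_adj_of_mem_witnessTree (hG : G.IsAcyclic) (hh : IsGrundyWitness G c h)
    {n i : ℕ} {v w : V} (hi : 1 ≤ i) (hiv : i < c v) (hw : w ∈ witnessTree c h n (h v i))
    (hvw : G.Adj v w) : w = h v i := by
  simpa using snd_eq_of_mem_witnessTree hG hh hi hiv hw hvw.isPath_toWalk

theorem eq_of_mem_witnessTree_of_mem_witnessTree (hG : G.IsAcyclic) (hh : IsGrundyWitness G c h)
    {n i j : ℕ} {v x : V} (hi : 1 ≤ i) (hiv : i < c v) (hj : 1 ≤ j) (hjv : j < c v)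
    (hxi : x ∈ witnessTree c h n (h v i)) (hxj : x ∈ witnessTree c h n (h v j)) : i = j := by
  obtain ⟨p, hp, hpi, -⟩ := exists_isPath_snd_eq_of_mem_witnessTree hh hi hiv hxi
  rw [← (hh v i hi hiv).2, ← (hh v j hj hjv).2, ← hpi,
    snd_eq_of_mem_witnessTree hG hh hj hjv hxj hp]

theorem eq_of_adj_of_mem_witnessTree_of_mem_witnessTree (hG : G.IsAcyclic)
    (hh : IsGrundyWitness G c h) {n i j : ℕ} {v x w : V} (hi : 1 ≤ i) (hiv : i < c v)
    (hj : 1 ≤ j) (hjv : j < c v) (hx : x ∈ witnessTree c h n (h v i))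
    (hw : w ∈ witnessTree c h n (h v j)) (hxw : G.Adj x w) : i = j := by
  by_cases hwi : w ∈ witnessTree c h n (h v i)
  · exact eq_of_mem_witnessTree_of_mem_witnessTree hG hh hi hiv hj hjv hwi hw
  obtain ⟨p, hp, hpi, hpW⟩ := exists_isPath_snd_eq_of_mem_witnessTree hh hi hiv hx
  have hwp : w ∉ p.support := fun hwp => (hpW w hwp).elim
    (fun hwv => notMem_witnessTree_of_lt hh hj hjv (hwv ▸ hw)) hwi
  have hsnd : (p.concat hxw).snd = h v i := by
    cases p with
    | nil => exact absurd hx (notMem_witnessTree_of_lt hh hi hiv)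
    | cons => simpa [Walk.concat_cons] using hpi
  rw [← (hh v i hi hiv).2, ← (hh v j hj hjv).2, ← hsnd,
    snd_eq_of_mem_witnessTree hG hh hj hjv hw (hp.concat hwp hxw)]

theorem exists_eq_of_adj_of_mem_witnessTree_succ (hG : G.IsAcyclic) (hh : IsGrundyWitness G c h)
    {n : ℕ} {v w : V} (hw : w ∈ witnessTree c h (n + 1) v) (hvw : G.Adj v w) :
    ∃ i, 1 ≤ i ∧ i < c v ∧ w = h v i := by
  obtain hwv | ⟨i, hi, hiv, hw⟩ := mem_witnessTree_succ.1 hw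
  · exact absurd hwv.symm hvw.ne
  · exact ⟨i, hi, hiv, eq_of_adj_of_mem_witnessTree hG hh hi hiv hw hvw⟩

theorem eq_or_mem_of_adj_of_mem_witnessTree (hG : G.IsAcyclic) (hh : IsGrundyWitness G c h)
    {n i : ℕ} {v x y : V} (hi : 1 ≤ i) (hiv : i < c v) (hx : x ∈ witnessTree c h n (h v i))
    (hy : y ∈ witnessTree c h (n + 1) v) (hxy : G.Adj x y) :
    (y = v ∧ x = h v i) ∨ y ∈ witnessTree c h n (h v i) := by
  obtain rfl | ⟨j, hj, hjv, hy⟩ := mem_witnessTree_succ.1 hy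
  · exact .inl ⟨rfl, eq_of_adj_of_mem_witnessTree hG hh hi hiv hx hxy.symm⟩
  · obtain rfl := eq_of_adj_of_mem_witnessTree_of_mem_witnessTree hG hh hi hiv hj hjv hx hy hxy
    exact .inr hy

/-- Inside a witness tree, a vertex has at most one neighbor of larger color and at most one
neighbor of each smaller color. -/
theorem eq_of_adj_of_adj_of_mem_witnessTree (hG : G.IsAcyclic) (hh : IsGrundyWitness G c h)
    {n : ℕ} {v x w w' : V} (hx : x ∈ witnessTree c h n v) (hw : w ∈ witnessTree c h n v)
    (hw' : w' ∈ witnessTree c h n v) (hxw : G.Adj x w) (hxw' : G.Adj x w')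
    (hcol : c w = c w' ∨ c x < c w ∧ c x < c w') : w = w' := by
  induction n generalizing v with
  | zero =>
    rw [mem_singleton.1 hx, ← mem_singleton.1 hw] at hxw
    exact (hxw.ne rfl).elim
  | succ n ih =>
    obtain rfl | ⟨i, hi, hiv, hx⟩ := mem_witnessTree_succ.1 hx
    · obtain ⟨a, ha, hax, rfl⟩ := exists_eq_of_adj_of_mem_witnessTree_succ hG hh hw hxw
      obtain ⟨b, hb, hbx, rfl⟩ := exists_eq_of_adj_of_mem_witnessTree_succ hG hh hw' hxw'
      rw [(hh x a ha hax).2, (hh x b hb hbx).2] at hcol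
      obtain rfl : a = b := by omega
      rfl
    have hci := (hh v i hi hiv).2
    obtain ⟨rfl, hxi⟩ | hw := eq_or_mem_of_adj_of_mem_witnessTree hG hh hi hiv hx hw hxw <;>
      obtain ⟨rfl, hxi'⟩ | hw' := eq_or_mem_of_adj_of_mem_witnessTree hG hh hi hiv hx hw' hxw'
    · rfl
    · have := color_le_of_mem_witnessTree hh hw'
      rw [hxi] at hcol
      omega
    · have := color_le_of_mem_witnessTree hh hw
      rw [hxi'] at hcol
      omega
    · exact ih hx hw hw'

theorem two_pow_le_card_witnessTree (hG : G.IsAcyclic) (hh : IsGrundyWitness G c h) {n : ℕ}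
    {v : V} (hv : c v ≤ n + 1) :
    2 ^ (c v - 1) ≤ #(witnessTree c h n v) := by
  induction n generalizing v with
  | zero => simp [witnessTree, show c v - 1 = 0 by omega]
  | succ n ih =>
    have hdisj : ((Icc 1 (c v - 1) : Finset ℕ) : Set ℕ).PairwiseDisjoint
        fun i => witnessTree c h n (h v i) := by
      refine fun i hi j hj hij => disjoint_left.2 fun x hxi hxj => hij ?_
      simp only [coe_Icc, Set.mem_Icc] at hi hj
      exact eq_of_mem_witnessTree_of_mem_witnessTree hG hh hi.1 (by omega) hj.1 (by omega) hxi hxj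
    have hv : v ∉ (Icc 1 (c v - 1)).biUnion fun i => witnessTree c h n (h v i) := by
      simp only [mem_biUnion, mem_Icc, not_exists, not_and, and_imp]
      exact fun i hi hiv => notMem_witnessTree_of_lt hh hi (by omega)
    have hbranch : ∀ i ∈ Icc 1 (c v - 1), 2 ^ (i - 1) ≤ #(witnessTree c h n (h v i)) := by
      intro i hi
      rw [mem_Icc] at hi
      have hci := (hh v i hi.1 (by omega)).2
      simpa [hci] using ih (v := h v i) (by omega)
    calc 2 ^ (c v - 1) = ∑ i ∈ Icc 1 (c v - 1), 2 ^ (i - 1) + 1 := by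
          rw [sum_Icc_two_pow_sub_one]; have := Nat.one_le_two_pow (n := c v - 1); omega
      _ ≤ ∑ i ∈ Icc 1 (c v - 1), #(witnessTree c h n (h v i)) + 1 := by
          gcongr with i hi
          exact hbranch i hi
      _ = #(witnessTree c h (n + 1) v) := by
          rw [witnessTree, card_insert_of_notMem hv, card_biUnion hdisj]

end WitnessTree

theorem IsGrundyColoring.eq_of_adj_of_adj [Fintype V] (hG : G.IsAcyclic) {k : ℕ} {c : V → ℕ}
    (hc : IsGrundyColoring G k c) (hcard : Fintype.card V ≤ 2 ^ (k - 1)) {x w w' : V}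
    (hxw : G.Adj x w) (hxw' : G.Adj x w') (hcol : c w = c w' ∨ c x < c w ∧ c x < c w') :
    w = w' := by
  classical
  have hcolor : ∀ v, 1 ≤ c v ∧ c v ≤ k := fun v => mem_Icc.1 (hc.1.1 v)
  have hwit : ∀ v i, ∃ u, 1 ≤ i → i < c v → G.Adj v u ∧ c u = i := fun v i => by
    by_cases hi : 1 ≤ i ∧ i < c v
    · obtain ⟨u, hu⟩ := hc.2 v i (mem_Icc.2 ⟨hi.1, by linarith [hcolor v]⟩) hi.2
      exact ⟨u, fun _ _ => hu⟩
    · exact ⟨v, fun h1 h2 => absurd ⟨h1, h2⟩ hi⟩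
  choose h hh using hwit
  obtain ⟨r, hr⟩ := hc.1.2.2 k (mem_Icc.2 ⟨(hcolor x).1.trans (hcolor x).2, le_rfl⟩)
  have huniv : witnessTree c h k r = univ := eq_univ_of_card _ <| le_antisymm (card_le_univ _)
    (hcard.trans (hr ▸ two_pow_le_card_witnessTree hG hh (by omega)))
  exact eq_of_adj_of_adj_of_mem_witnessTree hG hh (huniv ▸ mem_univ x) (huniv ▸ mem_univ w)
    (huniv ▸ mem_univ w') hxw hxw' hcol

theorem card_filter_color_le [Fintype V] [DecidableRel G.Adj] {c : V → ℕ}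
    (hproper : ∀ u v, G.Adj u v → c u ≠ c v)
    (hnbr : ∀ {x w w'}, G.Adj x w → G.Adj x w' →
      c w = c w' ∨ c x < c w ∧ c x < c w' → w = w')
    (x : V) (d : ℕ) : #{w ∈ G.neighborFinset x | d ≤ c w} ≤ c x - d + 1 := by
  -- neighbors of smaller color keep their color, the neighbor of larger color is sent to `c x`
  have hmaps : ∀ w ∈ {w ∈ G.neighborFinset x | d ≤ c w},
      min (c w) (c x) ∈ Icc (min d (c x)) (c x) := fun w hw => by
    rw [mem_filter] at hw
    simp only [mem_Icc]
    omega
  have hinj : Set.InjOn (fun w => min (c w) (c x))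
      ({w ∈ G.neighborFinset x | d ≤ c w} : Finset V) := by
    intro w hw w' hw' hww'
    simp only [coe_filter, mem_neighborFinset] at hw hw' hww'
    have := hproper x w hw.1
    have := hproper x w' hw'.1
    exact hnbr hw.1 hw'.1 (by omega)
  have := card_le_card_of_injOn _ hmaps hinj
  rw [Nat.card_Icc] at this
  omega

theorem IsGrundyColoring.card_filter_degree_le [Fintype V] [DecidableRel G.Adj]
    (hG : G.IsAcyclic) {k : ℕ} {c : V → ℕ} (hc : IsGrundyColoring G k c)
    (hcard : Fintype.card V ≤ 2 ^ (k - 1)) (x : V) (d : ℕ) :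
    #{w ∈ G.neighborFinset x | d ≤ G.degree w} ≤ k - d + 1 := by
  have hcolor : ∀ v, 1 ≤ c v ∧ c v ≤ k := fun v => mem_Icc.1 (hc.1.1 v)
  have hcount := card_filter_color_le hc.1.2.1 (hc.eq_of_adj_of_adj hG hcard)
  have hdeg : ∀ v, G.degree v ≤ c v := fun v => by
    have := hcount v 1
    rw [filter_true_of_mem fun w _ => (hcolor w).1, card_neighborFinset_eq_degree] at this
    have := (hcolor v).1
    omega
  calc #{w ∈ G.neighborFinset x | d ≤ G.degree w}
      ≤ #{w ∈ G.neighborFinset x | d ≤ c w} :=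
        card_le_card (monotone_filter_right _ fun w _ hw => hw.trans (hdeg w))
    _ ≤ c x - d + 1 := hcount x d
    _ ≤ k - d + 1 := by have := (hcolor x).2; omega

/-- For every `N` there is `K` such that every finite tree `T` with at
most `2^(k-1)` vertices and `Γ(T) = k ≥ K` satisfies `Γ(T) - z(T) ≥ N` (stated as
`z(T) + N ≤ Γ(T)`). In particular `Γ(T_k) - z(T_k) → ∞` for the minimal tree
`t`-atoms `T_k`, which have exactly `2^(k-1)` vertices and Grundy number `k`. -/
theorem statement_19 (N : ℕ) :
    ∃ K : ℕ, ∀ k : ℕ, K ≤ k →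
      ∀ (V : Type) (_ : Fintype V) (G : SimpleGraph V), G.IsTree →
        Fintype.card V ≤ 2 ^ (k - 1) → grundyNumber G = k →
        zNumber G + N ≤ grundyNumber G := by
  classical
  refine ⟨2 * N + 4, fun k hk V _ G hT hcard hΓ => ?_⟩
  obtain ⟨c, hc⟩ := exists_isGrundyColoring_of_grundyNumber_eq (by omega) hΓ
  have hz := zNumber_le_of_card_filter_degree_le (hc.card_filter_degree_le hT.isAcyclic hcard)
  omega
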